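/- arXiv:1608.00757 — 2 statements merged into one kernel-verified Lean document; each statement's English description precedes it below -/
import Mathlib

section
/- Let Z_1,...,Z_N be i.i.d. real random variables with finite second moment and mean μ. Fix δ ∈ [e^{1-N/2}, 1), set n = ⌈ln(1/δ)⌉, partition {1,...,N} into n blocks I_1,...,I_n each of cardinality at least ⌊N/n⌋ ≥ 2, let W_j be the sample mean over block I_j, and let μ̂ be the median of W_1,...,W_n. Then for any N ≥ 4, P(|μ̂ − μ| > 2e√(2·Var(Z)) · √((1 + ln(1/δ))/N)) ≤ δ. -/
/-! By Chebyshev's inequality, each block mean, whose variance is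
`Var Z / |I j| ≤ 2 Var Z (1 + ln(1/δ)) / N`, lies farther than the deviation radius `t` from `m`
with probability at most `1 / (4e²)`. The block means are independent, being functions of disjoint
families of independent variables. If the median is farther than `t` from `m`, then so are at
least `⌈n/2⌉` block means; a union bound over the sets of `⌈n/2⌉` blocks gives the probability
bound `C(n, ⌈n/2⌉) (4e²)^(-⌈n/2⌉) ≤ 2ⁿ (2e)^(-n) = e^(-n) ≤ δ`. -/

open MeasureTheory ProbabilityTheory Finset Function

section Independence

variable {Ω ι κ β γ : Type*} [MeasurableSpace Ω] [MeasurableSpace β] [MeasurableSpace γ]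
  {μ : Measure Ω}

theorem ProbabilityTheory.iIndepFun.comp_disjoint_blocks {Z : ι → Ω → β} (hZ : iIndepFun Z μ)
    (hmeas : ∀ i, Measurable (Z i)) {I : κ → Finset ι} (hI : Pairwise (Disjoint on I))
    {g : (k : κ) → (I k → β) → γ} (hg : ∀ k, Measurable (g k)) :
    iIndepFun (fun k ω ↦ g k fun i ↦ Z i ω) μ := by
  classical
  have := hZ.isProbabilityMeasure
  rw [iIndepFun_iff_measure_inter_preimage_eq_mul]
  intro S sets hsets
  induction S using Finset.induction_on with
  | empty => simp
  | insert j S hjS ih =>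
    have hdisj : Disjoint (I j) (S.biUnion I) :=
      (disjoint_biUnion_right _ _ _).2 fun l hl ↦ hI fun hjl ↦ hjS (hjl ▸ hl)
    have hregroup : Measurable fun (v : S.biUnion I → β) (l : S) ↦
        g l fun i ↦ v ⟨i, mem_biUnion.2 ⟨l, l.2, i.2⟩⟩ :=
      measurable_pi_lambda _ fun l ↦ (hg l).comp <| measurable_pi_lambda _ fun _ ↦
        measurable_pi_apply _
    have hind := (hZ.indepFun_finset _ _ hdisj hmeas).comp (hg j) hregroup
    have hrest : ⋂ l ∈ S, (fun ω ↦ g l fun i ↦ Z i ω) ⁻¹' sets l =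
        (fun ω (l : S) ↦ g l fun i ↦ Z i ω) ⁻¹' Set.univ.pi fun l ↦ sets l := by
      ext; simp
    rw [set_biInter_insert, prod_insert hjS, ← ih fun l hl ↦ hsets l (mem_insert_of_mem hl),
      hrest]
    exact hind.measure_inter_preimage_eq_mul _ _ (hsets j (mem_insert_self j S))
      (.univ_pi fun l ↦ hsets l (mem_insert_of_mem l.2))

theorem ProbabilityTheory.iIndepFun.iIndepSet_preimage {f : ι → Ω → β} (hf : iIndepFun f μ)
    (hmeas : ∀ i, Measurable (f i)) {C : ι → Set β} (hC : ∀ i, MeasurableSet (C i)) :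
    iIndepSet (fun i ↦ f i ⁻¹' C i) μ :=
  (iIndepSet_iff_meas_biInter fun i ↦ (hC i).preimage (hmeas i)).2 fun S ↦
    hf.measure_inter_preimage_eq_mul S fun i _ ↦ hC i

open Classical in
theorem ProbabilityTheory.iIndepSet.measure_le_card_filter_mem_le [Fintype ι] {A : ι → Set Ω}
    (hA : iIndepSet A μ) {p : ENNReal} (hp : ∀ i, μ (A i) ≤ p) (k : ℕ) :
    μ {ω | k ≤ #{i | ω ∈ A i}} ≤ (Fintype.card ι).choose k * p ^ k := by
  have hcover : {ω | k ≤ #{i | ω ∈ A i}} ⊆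
      ⋃ S ∈ powersetCard k (univ : Finset ι), ⋂ i ∈ S, A i := by
    intro ω hω
    obtain ⟨S, hS, hcard⟩ := exists_subset_card_eq hω
    refine Set.mem_biUnion (mem_powersetCard.2 ⟨subset_univ S, hcard⟩)
      (Set.mem_iInter₂.2 fun i hi ↦ ?_)
    simpa using hS hi
  calc μ {ω | k ≤ #{i | ω ∈ A i}}
      ≤ ∑ S ∈ powersetCard k (univ : Finset ι), μ (⋂ i ∈ S, A i) :=
        (measure_mono hcover).trans (measure_biUnion_finset_le _ _)
    _ ≤ ∑ S ∈ powersetCard k (univ : Finset ι), p ^ k := by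
        refine sum_le_sum fun S hS ↦ ?_
        rw [hA.meas_biInter, ← (mem_powersetCard.1 hS).2, ← prod_const]
        exact prod_le_prod' fun i _ ↦ hp i
    _ = (Fintype.card ι).choose k * p ^ k := by
        rw [sum_const, card_powersetCard, card_univ, nsmul_eq_mul]

end Independence

-- Stated with `p * t ^ 2` rather than `variance X μ / t ^ 2`, so that it remains true at `t = 0`.
theorem measure_lt_abs_sub_integral_le {Ω : Type*} [MeasurableSpace Ω] {μ : Measure Ω}
    [IsFiniteMeasure μ] {X : Ω → ℝ} (hX : MemLp X 2 μ) {t p : ℝ} (ht : 0 ≤ t)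
    (hvar : variance X μ ≤ p * t ^ 2) : μ {ω | t < |X ω - μ[X]|} ≤ ENNReal.ofReal p := by
  rcases ht.eq_or_lt with rfl | ht
  · have hvar0 : evariance X μ = 0 := by
      rw [← hX.ofReal_variance_eq, le_antisymm (by simpa using hvar) (variance_nonneg X μ),
        ENNReal.ofReal_zero]
    refine (measure_eq_zero_iff_ae_notMem.2 ?_).trans_le zero_le
    filter_upwards [(evariance_eq_zero_iff hX.aemeasurable).1 hvar0] with ω hω
    simp [hω]
  · calc μ {ω | t < |X ω - μ[X]|} ≤ μ {ω | t ≤ |X ω - μ[X]|} :=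
          measure_mono <| Set.ofPred_subset_ofPred.2 fun _ ↦ le_of_lt
      _ ≤ ENNReal.ofReal (variance X μ / t ^ 2) := meas_ge_le_variance_div_sq hX ht
      _ ≤ ENNReal.ofReal p := ENNReal.ofReal_le_ofReal <| (div_le_iff₀ (by positivity)).2 hvar

section BlockMean

variable {Ω ι : Type*} [MeasurableSpace Ω] {μ : Measure Ω} {Z : ι → Ω → ℝ} {s : Finset ι}

noncomputable def blockMean (Z : ι → Ω → ℝ) (s : Finset ι) : Ω → ℝ :=
  fun ω ↦ (1 / (#s : ℝ)) * ∑ i ∈ s, Z i ω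

theorem measurable_blockMean (hmeas : ∀ i ∈ s, Measurable (Z i)) :
    Measurable (blockMean Z s) :=
  (Finset.measurable_fun_sum _ hmeas).const_mul _

theorem memLp_blockMean {p : ENNReal} (hZ : ∀ i ∈ s, MemLp (Z i) p μ) :
    MemLp (blockMean Z s) p μ :=
  (memLp_finsetSum s hZ).const_mul _

theorem integral_blockMean (hs : s.Nonempty) (hint : ∀ i ∈ s, Integrable (Z i) μ) {m : ℝ}
    (hm : ∀ i ∈ s, μ[Z i] = m) : μ[blockMean Z s] = m := by
  unfold blockMean
  rw [integral_const_mul, integral_finsetSum s hint, sum_congr rfl hm, sum_const,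
    nsmul_eq_mul]
  field_simp [hs.card_pos.ne']

theorem variance_blockMean (hL2 : ∀ i ∈ s, MemLp (Z i) 2 μ)
    (hindep : Set.Pairwise s fun i j ↦ IndepFun (Z i) (Z j) μ) {v : ℝ}
    (hv : ∀ i ∈ s, variance (Z i) μ = v) : variance (blockMean Z s) μ = v / #s := by
  have hsum : (fun ω ↦ ∑ i ∈ s, Z i ω) = ∑ i ∈ s, Z i := by ext; simp
  unfold blockMean
  rw [variance_const_mul, hsum, IndepFun.variance_sum hL2 hindep, sum_congr rfl hv,
    sum_const, nsmul_eq_mul]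
  rcases eq_or_ne (#s : ℝ) 0 with h | h
  · simp [h]
  · field_simp

theorem measure_lt_abs_blockMean_sub_le [IsFiniteMeasure μ] (hs : s.Nonempty)
    (hL2 : ∀ i ∈ s, MemLp (Z i) 2 μ) (hindep : Set.Pairwise s fun i j ↦ IndepFun (Z i) (Z j) μ)
    {m v : ℝ} (hm : ∀ i ∈ s, μ[Z i] = m) (hv : ∀ i ∈ s, variance (Z i) μ = v) {t p : ℝ}
    (ht : 0 ≤ t) (hvt : v / #s ≤ p * t ^ 2) :
    μ {ω | t < |blockMean Z s ω - m|} ≤ ENNReal.ofReal p := by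
  have := measure_lt_abs_sub_integral_le (memLp_blockMean hL2) ht
    (variance_blockMean hL2 hindep hv ▸ hvt)
  rwa [integral_blockMean hs (fun i hi ↦ (hL2 i hi).integrable one_le_two) hm] at this

theorem ProbabilityTheory.iIndepFun.iIndepFun_blockMean {κ : Type*} (hZ : iIndepFun Z μ)
    (hmeas : ∀ i, Measurable (Z i)) {I : κ → Finset ι} (hI : Pairwise (Disjoint on I)) :
    iIndepFun (fun k ↦ blockMean Z (I k)) μ := by
  convert hZ.comp_disjoint_blocks hmeas hI (g := fun k v ↦ (1 / (#(I k) : ℝ)) * ∑ i, v i)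
    fun k ↦ (Finset.measurable_sum _ fun i _ ↦ measurable_pi_apply i).const_mul _ using 1
  funext k ω
  rw [blockMean, ← sum_coe_sort]

end BlockMean

theorem le_two_mul_card_lt_abs_sub {α ι : Type*} [Fintype ι] [AddCommGroup α] [LinearOrder α]
    [IsOrderedAddMonoid α] {w : ι → α} {x m t : α}
    (hle : Fintype.card ι ≤ 2 * #{j | w j ≤ x}) (hge : Fintype.card ι ≤ 2 * #{j | x ≤ w j})
    (hx : t < |x - m|) : Fintype.card ι ≤ 2 * #{j | t < |w j - m|} := by
  rcases lt_abs.1 hx with h | h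
  · refine hge.trans (Nat.mul_le_mul_left 2 (card_le_card fun j hj ↦ ?_))
    simp only [mem_filter, mem_univ, true_and] at hj ⊢
    exact h.trans_le ((sub_le_sub_right hj m).trans (le_abs_self _))
  · refine hle.trans (Nat.mul_le_mul_left 2 (card_le_card fun j hj ↦ ?_))
    simp only [mem_filter, mem_univ, true_and] at hj ⊢
    exact h.trans_le ((neg_le_neg (sub_le_sub_right hj m)).trans (neg_le_abs _))

theorem ProbabilityTheory.iIndepFun.measure_lt_abs_median_sub_le {Ω ι : Type*}
    [MeasurableSpace Ω] {μ : Measure Ω} [Fintype ι] {W : ι → Ω → ℝ} (hW : iIndepFun W μ)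
    (hmeas : ∀ j, Measurable (W j)) {x : Ω → ℝ}
    (hx : ∀ ω, Fintype.card ι ≤ 2 * #{j | W j ω ≤ x ω} ∧ Fintype.card ι ≤ 2 * #{j | x ω ≤ W j ω})
    {m t : ℝ} {p : ENNReal} (hp : ∀ j, μ {ω | t < |W j ω - m|} ≤ p) :
    μ {ω | t < |x ω - m|} ≤
      (Fintype.card ι).choose ((Fintype.card ι + 1) / 2) * p ^ ((Fintype.card ι + 1) / 2) := by
  have hindep : iIndepSet (fun j ↦ W j ⁻¹' {y | t < |y - m|}) μ :=
    hW.iIndepSet_preimage hmeas fun _ ↦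
      measurableSet_lt measurable_const (measurable_id.sub_const m).abs
  refine (measure_mono fun ω hω ↦ ?_).trans (hindep.measure_le_card_filter_mem_le hp _)
  have := le_two_mul_card_lt_abs_sub (hx ω).1 (hx ω).2 hω
  simp only [Set.mem_ofPred_eq, Set.mem_preimage]
  omega

theorem cast_le_two_mul_mul_of_one_le_div {N n c : ℕ} {r : ℝ} (h1 : 1 ≤ N / n) (hc : N / n ≤ c)
    (hr : n ≤ r) : (N : ℝ) ≤ 2 * r * c := by
  have hn : 0 < n := Nat.pos_of_ne_zero fun h ↦ by simp [h] at h1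
  have hmod : N % n < n * (N / n) := (Nat.mod_lt N hn).trans_le (Nat.le_mul_of_pos_right n h1)
  have hN : N ≤ 2 * n * c := calc
    N = n * (N / n) + N % n := (Nat.div_add_mod N n).symm
    _ ≤ 2 * n * (N / n) := by linarith
    _ ≤ 2 * n * c := Nat.mul_le_mul_left _ hc
  calc (N : ℝ) ≤ 2 * n * c := by exact_mod_cast hN
    _ ≤ 2 * r * c := by gcongr

theorem div_le_inv_four_mul_sq_mul_sq {a v r N c : ℝ} (ha : a ≠ 0) (hv : 0 ≤ v) (hr : 0 ≤ r)
    (hN : 0 < N) (hc : 0 < c) (hNc : N ≤ 2 * r * c) :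
    v / c ≤ 1 / (4 * a ^ 2) * (2 * a * √(2 * v) * √(r / N)) ^ 2 := by
  rw [mul_pow, mul_pow, Real.sq_sqrt (by positivity), Real.sq_sqrt (by positivity),
    div_le_iff₀ hc]
  field_simp
  nlinarith [mul_le_mul_of_nonneg_left hNc hv]

theorem Real.exp_neg_ceil_log_one_div_le {δ : ℝ} (hδ : 0 < δ) :
    exp (-⌈log (1 / δ)⌉₊) ≤ δ :=
  calc exp (-⌈log (1 / δ)⌉₊) ≤ exp (-log (1 / δ)) := exp_le_exp.2 (neg_le_neg (Nat.le_ceil _))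
    _ = δ := by rw [one_div, log_inv, neg_neg, exp_log hδ]

open Real in
theorem choose_mul_inv_four_mul_exp_two_pow_le {n k : ℕ} (hk : n ≤ 2 * k) :
    (n.choose k : ℝ) * (1 / (4 * exp 1 ^ 2)) ^ k ≤ exp (-n) := by
  have hq : 1 / (2 * exp 1) ≤ 1 := by
    rw [div_le_one (by positivity)]; linarith [add_one_le_exp (1 : ℝ)]
  calc (n.choose k : ℝ) * (1 / (4 * exp 1 ^ 2)) ^ k
      = n.choose k * (1 / (2 * exp 1)) ^ (2 * k) := by rw [pow_mul]; ring
    _ ≤ 2 ^ n * (1 / (2 * exp 1)) ^ n := by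
        gcongr ?_ * ?_
        · exact_mod_cast n.choose_le_two_pow k
        · exact pow_le_pow_of_le_one (by positivity) hq hk
    _ = exp (-n) := by
        rw [← mul_pow, exp_neg, ← exp_one_pow, ← inv_pow]
        congr 1
        field_simp

/-- The median-of-means estimator: for i.i.d. square-integrable `Z₁,...,Z_N` with mean `m`,
`δ ∈ [e^{1-N/2},1)`, `n = ⌈ln(1/δ)⌉` blocks each of size at least `⌊N/n⌋ ≥ 2`, the median
`μ̂` of the block means satisfies
`P(|μ̂ - m| > 2e√(2 Var(Z)) √((1+ln(1/δ))/N)) ≤ δ`. -/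
theorem median_of_means_deviation
    {Ω : Type*} [MeasurableSpace Ω] (P : Measure Ω) [IsProbabilityMeasure P]
    (N : ℕ) (hN : 4 ≤ N) (Z : Fin N → Ω → ℝ)
    (hmeas : ∀ i, Measurable (Z i))
    (hZ2 : MemLp (Z ⟨0, by omega⟩) 2 P)
    (hiid : iIndepFun Z P)
    (hid : ∀ i, P.map (Z i) = P.map (Z ⟨0, by omega⟩))
    (m : ℝ) (hmean : ∀ i, ∫ ω, Z i ω ∂P = m)
    (δ : ℝ) (hδ : δ ∈ Set.Ico (Real.exp (1 - (N:ℝ) / 2)) 1)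
    (n : ℕ) (hn : n = ⌈Real.log (1 / δ)⌉₊)
    (I : Fin n → Finset (Fin N))
    (hdisj : ∀ j k, j ≠ k → Disjoint (I j) (I k))
    (hsize : ∀ j, N / n ≤ (I j).card) (hblock : 2 ≤ N / n)
    (W : Fin n → Ω → ℝ)
    (hW : ∀ j ω, W j ω = (1 / ((I j).card : ℝ)) * ∑ i ∈ I j, Z i ω)
    (μhat : Ω → ℝ)
    (hmed : ∀ ω : Ω,
      n ≤ 2 * (Finset.univ.filter fun j => W j ω ≤ μhat ω).card ∧
      n ≤ 2 * (Finset.univ.filter fun j => μhat ω ≤ W j ω).card) :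
    P {ω | 2 * Real.exp 1 * Real.sqrt (2 * variance (Z ⟨0, by omega⟩) P)
            * Real.sqrt ((1 + Real.log (1 / δ)) / N) < |μhat ω - m|}
      ≤ ENNReal.ofReal δ := by
  obtain rfl : W = fun j ↦ blockMean Z (I j) := funext fun j ↦ funext (hW j)
  set L := Real.log (1 / δ)
  set t := 2 * Real.exp 1 * √(2 * variance (Z ⟨0, by omega⟩) P) * √((1 + L) / N)
  set p : ℝ := 1 / (4 * Real.exp 1 ^ 2)
  set k := (n + 1) / 2
  have hδ0 : 0 < δ := (Real.exp_pos _).trans_le hδ.1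
  have hL : 0 ≤ L := Real.log_nonneg <| (le_div_iff₀ hδ0).2 (by linarith [hδ.2])
  have hident : ∀ i, IdentDistrib (Z i) (Z ⟨0, by omega⟩) P P := fun i ↦
    ⟨(hmeas i).aemeasurable, (hmeas _).aemeasurable, hid i⟩
  have hL2 : ∀ i, MemLp (Z i) 2 P := fun i ↦ (hident i).symm.memLp_snd hZ2
  have hbad : ∀ j, P {ω | t < |blockMean Z (I j) ω - m|} ≤ ENNReal.ofReal p := fun j ↦
    have hcard : 0 < #(I j) := by have := hsize j; omega
    measure_lt_abs_blockMean_sub_le (card_pos.1 hcard) (fun i _ ↦ hL2 i)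
      (fun i _ i' _ h ↦ hiid.indepFun h) (fun i _ ↦ hmean i) (fun i _ ↦ (hident i).variance_eq)
      (by positivity) <|
      div_le_inv_four_mul_sq_mul_sq (Real.exp_pos 1).ne' (variance_nonneg _ _) (by linarith)
        (by exact_mod_cast (by omega : 0 < N)) (by exact_mod_cast hcard) <|
      cast_le_two_mul_mul_of_one_le_div (by omega) (hsize j)
        (by linarith [hn ▸ Nat.ceil_lt_add_one hL])
  calc P {ω | t < |μhat ω - m|}
      ≤ (n.choose k : ENNReal) * ENNReal.ofReal p ^ k := by
        simpa using (hiid.iIndepFun_blockMean hmeas hdisj).measure_lt_abs_median_sub_le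
          (fun j ↦ measurable_blockMean fun i _ ↦ hmeas i) (by simpa using hmed) hbad
    _ = ENNReal.ofReal (n.choose k * p ^ k) := by
        rw [ENNReal.ofReal_mul (by positivity), ENNReal.ofReal_pow (by positivity),
          ENNReal.ofReal_natCast]
    _ ≤ ENNReal.ofReal (Real.exp (-n)) :=
        ENNReal.ofReal_le_ofReal <| choose_mul_inv_four_mul_exp_two_pow_le (by omega)
    _ ≤ ENNReal.ofReal δ :=
        ENNReal.ofReal_le_ofReal <| hn ▸ Real.exp_neg_ceil_log_one_div_le hδ0
end

section
/- For 1 ≤ s ≤ n let V_s be the set of s-sparse vectors in the Euclidean unit sphere of R^n. Then conv(V_s) ⊂ √s·B_1^n ∩ B_2^n ⊂ C·conv(V_s) for an absolute constant C, where B_1^n and B_2^n are the unit balls of ℓ_1^n and ℓ_2^n respectively. -/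
open Metric Pointwise

/-- The set of `s`-sparse unit vectors in `ℝⁿ`. -/
def sparseSphere (n s : ℕ) : Set (EuclideanSpace ℝ (Fin n)) :=
  {x | ‖x‖ = 1 ∧ {i | x i ≠ 0}.ncard ≤ s}

/-!
Every point of `V_s` lies in the convex set `√s B₁ⁿ ∩ B₂ⁿ` by Cauchy–Schwarz on its support,
which gives the first inclusion. For the second, with `C = 2`, compare support functions:
`conv V_s` is compact and convex, so it suffices to show `⟪t, x⟫ ≤ 2 ‖t_S‖₂` for every direction
`t` and every `x ∈ √s B₁ⁿ ∩ B₂ⁿ`, where `S` carries the `s` largest `|tᵢ|`; the value `‖t_S‖₂` is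
attained on `conv V_s` at `t_S / ‖t_S‖₂`. The coordinates in `S` contribute at most
`‖t_S‖₂ ‖x‖₂ ≤ ‖t_S‖₂`, the others at most `(minᵢ∈S |tᵢ|) ‖x‖₁ ≤ (‖t_S‖₂ / √s) √s`.
-/

open Finset

theorem IsCompact.isCompact_convexHull {E : Type*} [NormedAddCommGroup E]
    [NormedSpace ℝ E] [FiniteDimensional ℝ E] {V : Set E} (hV : IsCompact V) :
    IsCompact (convexHull ℝ V) := by
  -- Carathéodory: every point of the hull is a convex combination of at most `finrank + 1`
  -- points of `V`.
  let comb (k : ℕ) (p : (Fin k → ℝ) × (Fin k → E)) : E := ∑ i, p.1 i • p.2 i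
  have hconv : convexHull ℝ V = ⋃ k ∈ range (Module.finrank ℝ E + 2),
      comb k '' (stdSimplex ℝ (Fin k) ×ˢ Set.univ.pi fun _ => V) := by
    refine subset_antisymm (fun x hx => ?_) ?_
    · obtain ⟨ι, _, z, w, hzV, hz, hw0, hw1, rfl⟩ := eq_pos_convex_span_of_mem_convexHull hx
      have hcard : Fintype.card ι < Module.finrank ℝ E + 2 := by
        have := hz.card_le_finrank_succ
        have := Submodule.finrank_le (vectorSpan ℝ (Set.range z))
        omega
      let e := (Fintype.equivFin ι).symm
      refine Set.mem_biUnion (mem_range.2 hcard)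
        ⟨(w ∘ e, z ∘ e), ⟨⟨fun i => (hw0 _).le, ?_⟩, fun i _ => hzV ⟨_, rfl⟩⟩, ?_⟩
      · simpa [e] using (e.sum_comp w).trans hw1
      · exact e.sum_comp fun i => w i • z i
    · refine Set.iUnion₂_subset fun k _ => ?_
      rintro _ ⟨⟨w, z⟩, ⟨hw, hz⟩, rfl⟩
      exact (convex_convexHull ℝ V).sum_mem (fun i _ => hw.1 i) hw.2
        fun i _ => subset_convexHull ℝ V (hz i trivial)
  rw [hconv]
  exact (finite_toSet _).isCompact_biUnion fun k _ =>
    ((isCompact_stdSimplex ℝ (Fin k)).prod (isCompact_univ_pi fun _ => hV)).image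
      (by fun_prop)

theorem exists_finset_card_eq_forall_notMem_le {ι α : Type*} [Fintype ι] [LinearOrder α]
    (f : ι → α) {s : ℕ} (hs : s ≤ Fintype.card ι) :
    ∃ S : Finset ι, #S = s ∧ ∀ i ∈ S, ∀ j ∉ S, f j ≤ f i := by
  classical
  induction s with
  | zero => exact ⟨∅, rfl, by simp⟩
  | succ s ih =>
    obtain ⟨S, hcard, htop⟩ := ih (by omega)
    have hne : Sᶜ.Nonempty := by
      rw [← card_pos, card_compl]
      omega
    obtain ⟨j₀, hj₀, hmax⟩ := Sᶜ.exists_max_image f hne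
    rw [mem_compl] at hj₀
    refine ⟨insert j₀ S, by rw [card_insert_of_notMem hj₀, hcard], ?_⟩
    intro i hi j hj
    rw [mem_insert, not_or] at hj
    rcases mem_insert.1 hi with rfl | hi
    · exact hmax j (mem_compl.2 hj.2)
    · exact htop i hi j hj.2

namespace EuclideanSpace

variable {ι : Type*} [Fintype ι]

theorem isClosed_setOf_ncard_support_le (s : ℕ) :
    IsClosed {x : EuclideanSpace ℝ ι | {i | x i ≠ 0}.ncard ≤ s} := by
  refine isOpen_compl_iff.1 (isOpen_iff_mem_nhds.2 fun x hx => ?_)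
  have hsupp : ∀ᶠ y in nhds x, ∀ i ∈ {i | x i ≠ 0}, y i ≠ 0 :=
    (Filter.eventually_all_finite (Set.toFinite _)).2 fun i hi =>
      (proj i).continuous.continuousAt.eventually_ne hi
  filter_upwards [hsupp] with y hy
  exact fun hys => hx ((Set.ncard_le_ncard hy).trans hys)

theorem sum_abs_le_sqrt_ncard_mul_norm (x : EuclideanSpace ℝ ι) :
    ∑ i, |x i| ≤ √({i | x i ≠ 0}.ncard) * ‖x‖ := by
  classical
  set T := univ.filter fun i => x i ≠ 0
  have hT : {i | x i ≠ 0}.ncard = #T := by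
    rw [Set.ncard_eq_toFinset_card', Set.toFinset_ofPred]
  have hsum : ∑ i ∈ T, |x i| = ∑ i, |x i| :=
    sum_filter_of_ne fun i _ h => by simpa using h
  have hsq : (∑ i ∈ T, |x i|) ^ 2 ≤ #T * ‖x‖ ^ 2 := by
    calc (∑ i ∈ T, |x i|) ^ 2 ≤ #T * ∑ i ∈ T, |x i| ^ 2 := sq_sum_le_card_mul_sum_sq
      _ ≤ #T * ‖x‖ ^ 2 := by
        rw [norm_sq_eq]
        gcongr
        simp only [Real.norm_eq_abs]
        exact sum_le_sum_of_subset_of_nonneg (subset_univ T) fun _ _ _ => by positivity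
  rw [hT, ← hsum, ← Real.sqrt_sq (norm_nonneg x), ← Real.sqrt_mul (Nat.cast_nonneg _)]
  exact (le_abs_self _).trans (Real.abs_le_sqrt hsq)

theorem convex_setOf_sum_abs_le (r : ℝ) :
    Convex ℝ {x : EuclideanSpace ℝ ι | ∑ i, |x i| ≤ r} := by
  intro x hx y hy a b ha hb hab
  calc ∑ i, |a * x i + b * y i| ≤ ∑ i, (a * |x i| + b * |y i|) :=
        sum_le_sum fun i _ => (abs_add_le _ _).trans_eq <| by
          rw [abs_mul, abs_mul, abs_of_nonneg ha, abs_of_nonneg hb]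
    _ = a * ∑ i, |x i| + b * ∑ i, |y i| := by rw [sum_add_distrib, mul_sum, mul_sum]
    _ ≤ a * r + b * r := by gcongr <;> assumption
    _ = r := by rw [← add_mul, hab, one_mul]

theorem inner_le_two_mul_sqrt_sum_sq
    {t x : EuclideanSpace ℝ ι} {S : Finset ι} (hS : S.Nonempty)
    (htop : ∀ i ∈ S, ∀ j ∉ S, |t j| ≤ |t i|) (hx₁ : ∑ i, |x i| ≤ √(#S : ℝ)) (hx₂ : ‖x‖ ≤ 1) :
    inner ℝ t x ≤ 2 * √(∑ i ∈ S, t i ^ 2) := by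
  classical
  set ρ := √(∑ i ∈ S, t i ^ 2)
  have hinner : inner ℝ t x = ∑ i ∈ S, t i * x i + ∑ i ∈ Sᶜ, t i * x i := by
    simp [PiLp.inner_apply, mul_comm, sum_add_sum_compl]
  have hS_le : ∑ i ∈ S, t i * x i ≤ ρ := by
    have hx : √(∑ i ∈ S, x i ^ 2) ≤ 1 :=
      calc √(∑ i ∈ S, x i ^ 2) ≤ √(∑ i, x i ^ 2) := Real.sqrt_le_sqrt <|
            sum_le_sum_of_subset_of_nonneg (subset_univ S) fun _ _ _ => sq_nonneg _
        _ = ‖x‖ := by simp [norm_eq]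
        _ ≤ 1 := hx₂
    calc ∑ i ∈ S, t i * x i ≤ ρ * √(∑ i ∈ S, x i ^ 2) := Real.sum_mul_le_sqrt_mul_sqrt _ _ _
      _ ≤ ρ := mul_le_of_le_one_right (Real.sqrt_nonneg _) hx
  set m := S.inf' hS fun i => |t i|
  have hm : 0 ≤ m := (le_inf'_iff hS _).2 fun i _ => abs_nonneg _
  have hmρ : √(#S : ℝ) * m ≤ ρ := by
    rw [← Real.sqrt_sq hm, ← Real.sqrt_mul (Nat.cast_nonneg _)]
    refine Real.sqrt_le_sqrt ?_
    rw [← nsmul_eq_mul, ← sum_const]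
    exact sum_le_sum fun i hi => by
      simpa only [sq_abs] using pow_le_pow_left₀ hm (inf'_le _ hi) 2
  have hSc_le : ∑ i ∈ Sᶜ, t i * x i ≤ ρ :=
    calc ∑ i ∈ Sᶜ, t i * x i ≤ ∑ i, m * |x i| := by
          refine (sum_le_sum fun i hi => ?_).trans
            (sum_le_sum_of_subset_of_nonneg (subset_univ _) fun i _ _ => by positivity)
          calc t i * x i ≤ |t i| * |x i| := by rw [← abs_mul]; exact le_abs_self _
            _ ≤ m * |x i| := by
              gcongr
              exact le_inf' hS _ fun j hj => htop j hj i (mem_compl.1 hi)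
      _ = m * ∑ i, |x i| := (mul_sum _ _ _).symm
      _ ≤ m * √(#S : ℝ) := by gcongr
      _ ≤ ρ := by rw [mul_comm]; exact hmρ
  linarith

end EuclideanSpace

namespace sparseSphere

variable {n s : ℕ}

theorem eq_sphere_inter :
    sparseSphere n s = sphere 0 1 ∩ {x | {i | x i ≠ 0}.ncard ≤ s} := by
  ext x
  simp [sparseSphere]

theorem isCompact : IsCompact (sparseSphere n s) := by
  rw [eq_sphere_inter]
  exact (isCompact_sphere 0 1).inter_right (EuclideanSpace.isClosed_setOf_ncard_support_le s)

theorem neg_mem {v : EuclideanSpace ℝ (Fin n)} (hv : v ∈ sparseSphere n s) :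
    -v ∈ sparseSphere n s := by
  simpa [sparseSphere] using hv

theorem single_mem (hs : 1 ≤ s) (i : Fin n) :
    EuclideanSpace.single i (1 : ℝ) ∈ sparseSphere n s := by
  refine ⟨by simp, le_trans ?_ hs⟩
  calc {j | EuclideanSpace.single i (1 : ℝ) j ≠ 0}.ncard ≤ ({i} : Set (Fin n)).ncard :=
        Set.ncard_le_ncard (fun j hj => by by_contra h; simp_all) (Set.toFinite _)
    _ = 1 := Set.ncard_singleton i

theorem zero_mem_convexHull (hs : 1 ≤ s) (hn : 0 < n) :
    (0 : EuclideanSpace ℝ (Fin n)) ∈ convexHull ℝ (sparseSphere n s) := by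
  have hv := single_mem hs (⟨0, hn⟩ : Fin n)
  rw [← midpoint_neg_self ℝ (EuclideanSpace.single _ (1 : ℝ))]
  exact segment_subset_convexHull (neg_mem hv) hv (midpoint_mem_segment _ _)

theorem mem_convexHull_of_norm_le (hs : 1 ≤ s) (hn : 0 < n) {v : EuclideanSpace ℝ (Fin n)}
    (hv : ‖v‖ ≤ 1) (hsupp : {i | v i ≠ 0}.ncard ≤ s) :
    v ∈ convexHull ℝ (sparseSphere n s) := by
  rcases eq_or_ne v 0 with rfl | hv0
  · exact zero_mem_convexHull hs hn
  have hu : ‖v‖⁻¹ • v ∈ sparseSphere n s :=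
    ⟨norm_smul_inv_norm hv0, by simpa [sparseSphere, hv0] using hsupp⟩
  simpa [smul_smul, hv0] using (convex_convexHull ℝ _).smul_mem_of_zero_mem
    (zero_mem_convexHull hs hn) (subset_convexHull ℝ _ hu) ⟨norm_nonneg v, hv⟩

theorem convexHull_subset_setOf_sum_abs_le_inter_closedBall :
    convexHull ℝ (sparseSphere n s)
      ⊆ {x : EuclideanSpace ℝ (Fin n) | ∑ i, |x i| ≤ √s} ∩ closedBall 0 1 := by
  refine convexHull_min (fun v hv => ⟨?_, ?_⟩)
    ((EuclideanSpace.convex_setOf_sum_abs_le _).inter (convex_closedBall 0 1))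
  · calc ∑ i, |v i| ≤ √({i | v i ≠ 0}.ncard) * ‖v‖ :=
          EuclideanSpace.sum_abs_le_sqrt_ncard_mul_norm v
      _ ≤ √s := by rw [hv.1, mul_one]; exact Real.sqrt_le_sqrt (by exact_mod_cast hv.2)
  · exact mem_closedBall_zero_iff.2 hv.1.le

theorem exists_mem_convexHull_inner_eq (hs : 1 ≤ s) (hn : 0 < n)
    (t : EuclideanSpace ℝ (Fin n)) {S : Finset (Fin n)} (hS : #S ≤ s) :
    ∃ v ∈ convexHull ℝ (sparseSphere n s), inner ℝ t v = √(∑ i ∈ S, t i ^ 2) := by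
  classical
  set ρ := √(∑ i ∈ S, t i ^ 2)
  have hρ : ρ ^ 2 = ∑ i ∈ S, t i ^ 2 := Real.sq_sqrt (sum_nonneg fun _ _ => sq_nonneg _)
  set v : EuclideanSpace ℝ (Fin n) := WithLp.toLp 2 fun i => if i ∈ S then t i / ρ else 0
  refine ⟨v, mem_convexHull_of_norm_le hs hn ?_ ?_, ?_⟩
  · rw [EuclideanSpace.norm_eq, Real.sqrt_le_one]
    simp [v, apply_ite, div_pow, ← sum_div, ← hρ, div_self_le_one]
  · calc {i | v i ≠ 0}.ncard ≤ (S : Set (Fin n)).ncard :=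
          Set.ncard_le_ncard (fun i hi => by by_contra h; simp_all [v]) (Set.toFinite _)
      _ ≤ s := by rwa [Set.ncard_coe_finset]
  · calc inner ℝ t v = ρ ^ 2 / ρ := by
          simp only [PiLp.inner_apply, apply_ite, RCLike.inner_apply, Real.ringHom_apply,
            div_mul_eq_mul_div, ← sq, zero_mul, sum_ite_mem, univ_inter, ← sum_div, ← hρ, v]
      _ = ρ := by rw [sq, mul_self_div_self]

theorem setOf_sum_abs_le_inter_closedBall_subset_two_smul_convexHull
    (hs : 1 ≤ s) (hsn : s ≤ n) :
    {x : EuclideanSpace ℝ (Fin n) | ∑ i, |x i| ≤ √s} ∩ closedBall 0 1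
      ⊆ (2 : ℝ) • convexHull ℝ (sparseSphere n s) := by
  rintro x ⟨hx₁, hx₂⟩
  have hK : IsCompact ((2 : ℝ) • convexHull ℝ (sparseSphere n s)) :=
    isCompact.isCompact_convexHull.smul _
  rw [← RCLike.iInter_halfSpaces_eq (𝕜 := ℝ) ((convex_convexHull ℝ _).smul 2) hK.isClosed]
  refine Set.mem_iInter.2 fun f => ?_
  set t := (InnerProductSpace.toDual ℝ (EuclideanSpace ℝ (Fin n))).symm f
  have hf : ∀ y, f y = inner ℝ t y := fun y => InnerProductSpace.toDual_symm_apply.symm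
  obtain ⟨S, hcard, htop⟩ :=
    exists_finset_card_eq_forall_notMem_le (fun i => |t i|) (by simpa using hsn)
  obtain ⟨v, hv, hinner⟩ := exists_mem_convexHull_inner_eq hs (by omega) t hcard.le
  refine ⟨(2 : ℝ) • v, Set.smul_mem_smul_set hv, ?_⟩
  have hS : S.Nonempty := by rw [← card_pos, hcard]; omega
  calc RCLike.re (f x) = inner ℝ t x := hf x
    _ ≤ 2 * √(∑ i ∈ S, t i ^ 2) := EuclideanSpace.inner_le_two_mul_sqrt_sum_sq hS htop
          (by rwa [hcard]) (mem_closedBall_zero_iff.1 hx₂)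
    _ = RCLike.re (f ((2 : ℝ) • v)) := by simp [hf, inner_smul_right, hinner]

end sparseSphere

/-- `conv(V_s) ⊆ √s B₁ⁿ ∩ B₂ⁿ ⊆ C·conv(V_s)` for an absolute constant `C`, where `V_s` is
the set of `s`-sparse vectors on the Euclidean unit sphere. -/
theorem sparse_convex_hull_equivalence :
    ∃ C : ℝ, 0 < C ∧
      ∀ (n s : ℕ), 1 ≤ s → s ≤ n →
        convexHull ℝ (sparseSphere n s)
            ⊆ {x : EuclideanSpace ℝ (Fin n) | ∑ i, |x i| ≤ Real.sqrt s}
              ∩ closedBall 0 1 ∧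
        {x : EuclideanSpace ℝ (Fin n) | ∑ i, |x i| ≤ Real.sqrt s} ∩ closedBall 0 1
            ⊆ C • convexHull ℝ (sparseSphere n s) :=
  ⟨2, two_pos, fun _ _ hs hsn =>
    ⟨sparseSphere.convexHull_subset_setOf_sum_abs_le_inter_closedBall,
      sparseSphere.setOf_sum_abs_le_inter_closedBall_subset_two_smul_convexHull hs hsn⟩⟩
end
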